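/- arXiv:1108.5356 — 5 statements merged into one kernel-verified Lean document; each statement's English description precedes it below -/
import Mathlib

section
/- For l ≥ 1, the Lambert series T_l(λ) = ∑_{i≥1} i^l λ^i/(1-λ^i) satisfies T_l(λ) ~ l! ζ(l+1)/(1-λ)^{l+1} as λ → 1⁻, i.e. lim_{λ→1⁻} (1-λ)^{l+1} T_l(λ) = l! ζ(l+1). -/
/-!
Expanding `λ^i / (1 - λ^i) = ∑_{n ≥ 1} λ^{ni}` and summing over `i` first gives
`T_l(λ) = ∑_{n ≥ 1} Li_{-l}(λ^n)`. Comparing `i^l` with `l! C(i+l-1, l)` from above and with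
`l! C(i-1, l)` from below yields `l! x^{l+1} ≤ (1-x)^{l+1} Li_{-l}(x) ≤ l! x`, hence
`(1-λ)^{l+1} Li_{-l}(λ^n) → l! / n^{l+1}` as `λ → 1⁻`. These terms are bounded by
`l! (l+1)^{l+1} / n^{l+1}` uniformly in `λ`, so Tannery's theorem lets the limit pass through
the sum over `n`.
-/

open Filter Topology Set Nat

/-- `Li_{-l}(x)`. -/
noncomputable def negPolylog (l : ℕ) (x : ℝ) : ℝ :=
  ∑' i : ℕ, ((i + 1 : ℕ) : ℝ) ^ l * x ^ (i + 1)

lemma summable_negPolylog (l : ℕ) {x : ℝ} (hx : ‖x‖ < 1) :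
    Summable fun i : ℕ => ((i + 1 : ℕ) : ℝ) ^ l * x ^ (i + 1) :=
  (summable_nat_add_iff 1).2 (summable_pow_mul_geometric_of_norm_lt_one (R := ℝ) l hx)

lemma hasSum_choose_mul_pow (l : ℕ) {x : ℝ} (hx : ‖x‖ < 1) :
    HasSum (fun i : ℕ => (i.choose l : ℝ) * x ^ i) (x ^ l / (1 - x) ^ (l + 1)) := by
  have hvanish : ∀ i ∉ range (· + l), (i.choose l : ℝ) * x ^ i = 0 := by
    intro i hi
    have hil : i < l := by
      by_contra! h
      exact hi ⟨i - l, Nat.sub_add_cancel h⟩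
    simp [Nat.choose_eq_zero_of_lt hil]
  refine (Function.Injective.hasSum_iff (add_left_injective l) hvanish).1 ?_
  have h := (hasSum_choose_mul_geometric_of_norm_lt_one l hx).mul_left (x ^ l)
  rw [mul_one_div] at h
  refine h.congr_fun fun j => ?_
  simp only [Function.comp_apply, pow_add]
  ring

lemma negPolylog_le (l : ℕ) {x : ℝ} (hx0 : 0 ≤ x) (hx1 : x < 1) :
    negPolylog l x ≤ l ! * x / (1 - x) ^ (l + 1) := by
  have hx : ‖x‖ < 1 := by rwa [Real.norm_of_nonneg hx0]
  have hsum := (hasSum_choose_mul_geometric_of_norm_lt_one l hx).mul_left (l ! * x)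
  rw [mul_one_div] at hsum
  refine hasSum_le (fun i => ?_) (summable_negPolylog l hx).hasSum hsum
  have hasc : ((i + 1 : ℕ) : ℝ) ^ l ≤ l ! * ((i + l).choose l : ℕ) := by
    exact_mod_cast (Nat.pow_succ_le_ascFactorial _ l).trans
      (Nat.ascFactorial_eq_factorial_mul_choose i l).le
  calc ((i + 1 : ℕ) : ℝ) ^ l * x ^ (i + 1) ≤ l ! * ((i + l).choose l : ℕ) * x ^ (i + 1) := by
        gcongr
    _ = l ! * x * (((i + l).choose l : ℕ) * x ^ i) := by ring

lemma le_negPolylog (l : ℕ) {x : ℝ} (hx0 : 0 ≤ x) (hx1 : x < 1) :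
    l ! * x ^ (l + 1) / (1 - x) ^ (l + 1) ≤ negPolylog l x := by
  have hx : ‖x‖ < 1 := by rwa [Real.norm_of_nonneg hx0]
  have hsum := (hasSum_choose_mul_pow l hx).mul_left (l ! * x)
  rw [show (l ! : ℝ) * x * (x ^ l / (1 - x) ^ (l + 1)) = l ! * x ^ (l + 1) / (1 - x) ^ (l + 1) by
    ring] at hsum
  refine hasSum_le (fun i => ?_) hsum (summable_negPolylog l hx).hasSum
  have hdesc : (l ! * i.choose l : ℝ) ≤ ((i + 1 : ℕ) : ℝ) ^ l := by
    exact_mod_cast (Nat.descFactorial_eq_factorial_mul_choose i l).symm.le.trans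
      ((Nat.descFactorial_le_pow i l).trans (Nat.pow_le_pow_left i.le_succ l))
  calc (l ! : ℝ) * x * (i.choose l * x ^ i) = l ! * i.choose l * x ^ (i + 1) := by ring
    _ ≤ ((i + 1 : ℕ) : ℝ) ^ l * x ^ (i + 1) := by gcongr

lemma tendsto_one_sub_pow_mul_negPolylog (l : ℕ) :
    Tendsto (fun x => (1 - x) ^ (l + 1) * negPolylog l x) (𝓝[<] 1) (𝓝 (l ! : ℝ)) := by
  have hlow : Tendsto (fun x : ℝ => l ! * x ^ (l + 1)) (𝓝[<] 1) (𝓝 (l ! : ℝ)) := by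
    simpa using tendsto_nhdsWithin_of_tendsto_nhds
      (((continuous_pow (l + 1)).tendsto (1 : ℝ)).const_mul (l ! : ℝ))
  have hup : Tendsto (fun x : ℝ => l ! * x) (𝓝[<] 1) (𝓝 (l ! : ℝ)) := by
    simpa using tendsto_nhdsWithin_of_tendsto_nhds
      ((continuous_id.tendsto (1 : ℝ)).const_mul (l ! : ℝ))
  refine tendsto_of_tendsto_of_tendsto_of_le_of_le' hlow hup ?_ ?_ <;>
    filter_upwards [Ioo_mem_nhdsLT zero_lt_one] with x ⟨hx0, hx1⟩ <;>
    have hpos : 0 < (1 - x) ^ (l + 1) := pow_pos (by linarith) _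
  · have := le_negPolylog l hx0.le hx1
    rwa [div_le_iff₀' hpos] at this
  · have := negPolylog_le l hx0.le hx1
    rwa [le_div_iff₀' hpos] at this

lemma succ_mul_pow_mul_one_sub_le {x : ℝ} (hx0 : 0 ≤ x) (hx1 : x ≤ 1) {j n : ℕ} (hjn : j < n) :
    (j + 1) * x ^ j * (1 - x) ≤ 1 - x ^ n := by
  have hgeom : (j + 1) * x ^ j ≤ ∑ k ∈ Finset.range n, x ^ k :=
    calc (j + 1) * x ^ j = ∑ _k ∈ Finset.range (j + 1), x ^ j := by simp
      _ ≤ ∑ k ∈ Finset.range (j + 1), x ^ k :=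
          Finset.sum_le_sum fun k hk =>
            pow_le_pow_of_le_one hx0 hx1 (Finset.mem_range_succ_iff.1 hk)
      _ ≤ ∑ k ∈ Finset.range n, x ^ k :=
          Finset.sum_le_sum_of_subset_of_nonneg (Finset.range_subset_range.2 hjn)
            fun k _ _ => by positivity
  rw [← mul_neg_geom_sum, mul_comm (1 - x)]
  exact mul_le_mul_of_nonneg_right hgeom (by linarith)

lemma pow_mul_mul_one_sub_pow_le {K n : ℕ} (hK : 0 < K) (hn : 0 < n) {x : ℝ} (hx0 : 0 ≤ x)
    (hx1 : x ≤ 1) : x ^ n * (n * (1 - x)) ^ K ≤ K ^ K * (1 - x ^ n) ^ K := by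
  -- `j` is chosen so that `j K ≤ n ≤ K (j + 1)`.
  set j := (n - 1) / K
  have hjK : j * K ≤ n := (Nat.div_mul_le_self _ _).trans (Nat.sub_le n 1)
  have hjn : j < n := by have := Nat.div_le_self (n - 1) K; omega
  have hnK : (n : ℝ) ≤ K * (j + 1) := by
    have : n - 1 < K * (j + 1) := Nat.lt_mul_div_succ (n - 1) hK
    exact_mod_cast (by omega : n ≤ K * (j + 1))
  have hbase : n * (1 - x) * x ^ j ≤ K * (1 - x ^ n) :=
    calc n * (1 - x) * x ^ j ≤ K * (j + 1) * (1 - x) * x ^ j := by gcongr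
      _ = K * ((j + 1) * x ^ j * (1 - x)) := by ring
      _ ≤ K * (1 - x ^ n) := by
          gcongr
          exact succ_mul_pow_mul_one_sub_le hx0 hx1 hjn
  calc x ^ n * (n * (1 - x)) ^ K ≤ (x ^ j) ^ K * (n * (1 - x)) ^ K := by
        gcongr
        rw [← pow_mul]
        exact pow_le_pow_of_le_one hx0 hx1 hjK
    _ = (n * (1 - x) * x ^ j) ^ K := by rw [← mul_pow, mul_comm]
    _ ≤ (K * (1 - x ^ n)) ^ K := by gcongr
    _ = K ^ K * (1 - x ^ n) ^ K := mul_pow _ _ _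

lemma negPolylog_nonneg (l : ℕ) {x : ℝ} (hx : 0 ≤ x) : 0 ≤ negPolylog l x :=
  tsum_nonneg fun _ => by positivity

lemma one_sub_pow_mul_negPolylog_pow_le (l : ℕ) {n : ℕ} (hn : 0 < n) {x : ℝ} (hx0 : 0 ≤ x)
    (hx1 : x < 1) :
    (1 - x) ^ (l + 1) * negPolylog l (x ^ n) ≤ l ! * (l + 1) ^ (l + 1) / n ^ (l + 1) := by
  have hxn : x ^ n < 1 := pow_lt_one₀ hx0 hx1 hn.ne'
  have hpos : 0 < (1 - x ^ n) ^ (l + 1) := pow_pos (by linarith) _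
  have hdom : x ^ n * (n * (1 - x)) ^ (l + 1) ≤ (l + 1) ^ (l + 1) * (1 - x ^ n) ^ (l + 1) := by
    exact_mod_cast pow_mul_mul_one_sub_pow_le l.succ_pos hn hx0 hx1.le
  calc (1 - x) ^ (l + 1) * negPolylog l (x ^ n)
      ≤ (1 - x) ^ (l + 1) * (l ! * x ^ n / (1 - x ^ n) ^ (l + 1)) :=
        mul_le_mul_of_nonneg_left (negPolylog_le l (by positivity) hxn)
          (pow_nonneg (by linarith) _)
    _ = l ! * (x ^ n * (n * (1 - x)) ^ (l + 1)) / ((1 - x ^ n) ^ (l + 1) * n ^ (l + 1)) := by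
        rw [mul_pow]
        field_simp
    _ ≤ l ! * ((l + 1) ^ (l + 1) * (1 - x ^ n) ^ (l + 1)) /
          ((1 - x ^ n) ^ (l + 1) * n ^ (l + 1)) := by
        gcongr
    _ = l ! * (l + 1) ^ (l + 1) / n ^ (l + 1) := by
        field_simp

lemma tendsto_one_sub_pow_mul_negPolylog_pow (l n : ℕ) :
    Tendsto (fun x => (1 - x) ^ (l + 1) * negPolylog l (x ^ (n + 1))) (𝓝[<] 1)
      (𝓝 (l ! * (1 / ((n + 1 : ℕ) : ℝ) ^ (l + 1)))) := by
  have hpow : Tendsto (fun x : ℝ => x ^ (n + 1)) (𝓝[<] 1) (𝓝[<] 1) := by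
    refine tendsto_nhdsWithin_iff.2 ⟨tendsto_nhdsWithin_of_tendsto_nhds ?_, ?_⟩
    · simpa using (continuous_pow (n + 1)).tendsto (1 : ℝ)
    · filter_upwards [Ioo_mem_nhdsLT zero_lt_one] with x hx
      exact pow_lt_one₀ hx.1.le hx.2 n.succ_ne_zero
  have hgeom : Tendsto (fun x : ℝ => 1 / ∑ k ∈ Finset.range (n + 1), x ^ k) (𝓝[<] 1)
      (𝓝 (1 / ((n + 1 : ℕ) : ℝ))) := by
    refine tendsto_nhdsWithin_of_tendsto_nhds (tendsto_const_nhds.div ?_ (by positivity))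
    simpa using (continuous_finsetSum (Finset.range (n + 1)) fun k _ => continuous_pow k).tendsto
      (1 : ℝ)
  rw [show (l ! : ℝ) * (1 / ((n + 1 : ℕ) : ℝ) ^ (l + 1)) =
    (1 / ((n + 1 : ℕ) : ℝ)) ^ (l + 1) * (l ! : ℝ) by ring]
  refine ((hgeom.pow (l + 1)).mul ((tendsto_one_sub_pow_mul_negPolylog l).comp hpow)).congr' ?_
  filter_upwards [Ioo_mem_nhdsLT zero_lt_one] with x hx
  have hsum : 0 < ∑ k ∈ Finset.range (n + 1), x ^ k :=
    Finset.sum_pos (fun k _ => pow_pos hx.1 k) Finset.nonempty_range_add_one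
  simp only [Function.comp_apply, ← mul_neg_geom_sum x (n + 1)]
  rw [mul_comm (1 - x), mul_pow, ← mul_assoc, ← mul_assoc, ← mul_pow, one_div_mul_cancel hsum.ne',
    one_pow, one_mul]

lemma tsum_lambert_eq_tsum_negPolylog (l : ℕ) {x : ℝ} (hx0 : 0 ≤ x) (hx1 : x < 1) :
    ∑' i : ℕ, ((i + 1 : ℕ) : ℝ) ^ l * x ^ (i + 1) / (1 - x ^ (i + 1)) =
      ∑' n : ℕ, negPolylog l (x ^ (n + 1)) := by
  set f : ℕ → ℕ → ℝ := fun n i => ((i + 1 : ℕ) : ℝ) ^ l * (x ^ (n + 1)) ^ (i + 1)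
  have hxk : ∀ k : ℕ, x ^ (k + 1) < 1 := fun k => pow_lt_one₀ hx0 hx1 k.succ_ne_zero
  have hrow (n : ℕ) : Summable (f n) :=
    summable_negPolylog l (by rw [Real.norm_of_nonneg (by positivity)]; exact hxk n)
  have hcol (i : ℕ) :
      HasSum (fun n => f n i) (((i + 1 : ℕ) : ℝ) ^ l * x ^ (i + 1) / (1 - x ^ (i + 1))) := by
    refine ((hasSum_geometric_of_lt_one (by positivity) (hxk i)).mul_left
      (((i + 1 : ℕ) : ℝ) ^ l * x ^ (i + 1))).congr_fun fun n => ?_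
    simp only [f, ← pow_mul]
    ring
  have hrowsum : Summable fun n => ∑' i, f n i := by
    refine .of_nonneg_of_le (fun n => negPolylog_nonneg l (by positivity)) (fun n => ?_)
      ((summable_geometric_of_lt_one hx0 hx1).mul_left (l ! * x / (1 - x) ^ (l + 1)))
    calc ∑' i, f n i ≤ l ! * x ^ (n + 1) / (1 - x ^ (n + 1)) ^ (l + 1) :=
          negPolylog_le l (by positivity) (hxk n)
      _ ≤ l ! * x ^ (n + 1) / (1 - x) ^ (l + 1) := by
          gcongr
          exact pow_le_of_le_one hx0 hx1.le n.succ_ne_zero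
      _ = l ! * x / (1 - x) ^ (l + 1) * x ^ n := by ring
  have hprod : Summable (Function.uncurry f) :=
    (summable_prod_of_nonneg fun p => by
      simp only [Pi.zero_apply, Function.uncurry, f]; positivity).2 ⟨hrow, hrowsum⟩
  calc ∑' i : ℕ, ((i + 1 : ℕ) : ℝ) ^ l * x ^ (i + 1) / (1 - x ^ (i + 1))
      = ∑' i, ∑' n, f n i := tsum_congr fun i => (hcol i).tsum_eq.symm
    _ = ∑' n, ∑' i, f n i := hprod.tsum_comm' hrow fun i => (hcol i).summable

open Filter in
/-- For `l ≥ 1`, `T_l(λ) = ∑_{i≥1} i^l λ^i/(1-λ^i)` satisfies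
`T_l(λ) ~ l! ζ(l+1)/(1-λ)^{l+1}` as `λ → 1⁻`, i.e.
`lim_{λ→1⁻} (1-λ)^{l+1} T_l(λ) = l! ζ(l+1)`. -/
theorem lambert_series_heavy_traffic (l : ℕ) (hl : 1 ≤ l) :
    Tendsto
      (fun lam : ℝ => (1 - lam) ^ (l + 1) *
        ∑' i : ℕ, ((i + 1 : ℕ) : ℝ) ^ l * lam ^ (i + 1) / (1 - lam ^ (i + 1)))
      (nhdsWithin 1 (Set.Ioo 0 1))
      (nhds ((Nat.factorial l : ℝ) * ∑' n : ℕ, 1 / ((n + 1 : ℕ) : ℝ) ^ (l + 1))) := by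
  have hζ : Summable fun n : ℕ => 1 / ((n + 1 : ℕ) : ℝ) ^ (l + 1) :=
    (summable_nat_add_iff 1).2 (Real.summable_one_div_nat_pow.2 (by omega))
  have hbound : ∀ᶠ x in 𝓝[<] (1 : ℝ), ∀ n : ℕ, ‖(1 - x) ^ (l + 1) * negPolylog l (x ^ (n + 1))‖
      ≤ l ! * (l + 1) ^ (l + 1) * (1 / ((n + 1 : ℕ) : ℝ) ^ (l + 1)) := by
    filter_upwards [Ioo_mem_nhdsLT zero_lt_one] with x hx n
    rw [Real.norm_of_nonneg (mul_nonneg (pow_nonneg (by linarith [hx.2]) _)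
      (negPolylog_nonneg l (pow_nonneg hx.1.le _))), mul_one_div]
    exact one_sub_pow_mul_negPolylog_pow_le l n.succ_pos hx.1.le hx.2
  have hlim := tendsto_tsum_of_dominated_convergence (hζ.mul_left _)
    (tendsto_one_sub_pow_mul_negPolylog_pow l) hbound
  rw [← tsum_mul_left]
  refine (hlim.congr' ?_).mono_left (nhdsWithin_mono _ Ioo_subset_Iio_self)
  filter_upwards [Ioo_mem_nhdsLT zero_lt_one] with x hx
  rw [tsum_lambert_eq_tsum_negPolylog l hx.1.le hx.2, tsum_mul_left]
end

section
/- As λ → 1⁻, T_0(λ) = ∑_{i≥1} λ^i/(1-λ^i) satisfies T_0(λ) (1-λ)/log(1/(1-λ)) → 1. -/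
/-!
For `0 ≤ x < 1` and `m ≥ 1`, Bernoulli's inequality `1 - x^m ≤ m (1 - x)` and the geometric-sum
bound `m x^m (1 - x) ≤ 1 - x^m` put the `m`-th term of `(1 - x) T_0(x)` between `x^m / m` and
`x^m / m + x^m (1 - x)`. Summing, with `∑ x^m / m = log (1 / (1 - x))` and `∑ x^m (1 - x) = x`,
gives `log (1 / (1 - x)) ≤ (1 - x) T_0(x) ≤ log (1 / (1 - x)) + x`, and the logarithm tends
to `∞` as `x → 1⁻`.
-/

open Filter Topology Finset

lemma one_sub_pow_le_mul_one_sub {x : ℝ} (hx : -1 ≤ x) (n : ℕ) :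
    1 - x ^ n ≤ n * (1 - x) := by
  have := one_add_mul_le_pow (a := x - 1) (by linarith) n
  simp only [add_sub_cancel] at this
  linarith

lemma mul_pow_mul_one_sub_le_one_sub_pow {x : ℝ} (hx₀ : 0 ≤ x) (hx₁ : x ≤ 1) (n : ℕ) :
    n * x ^ n * (1 - x) ≤ 1 - x ^ n := by
  have hsum : n * x ^ n ≤ ∑ i ∈ range n, x ^ i := by
    simpa using card_nsmul_le_sum (range n) (x ^ ·) (x ^ n) fun i hi =>
      pow_le_pow_of_le_one hx₀ hx₁ (mem_range.mp hi).le
  rw [← mul_neg_geom_sum, mul_comm (1 - x)]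
  exact mul_le_mul_of_nonneg_right hsum (by linarith)

section LambertTerm

variable {x : ℝ} (hx₀ : 0 ≤ x) (hx₁ : x < 1) (n : ℕ)
include hx₀ hx₁

lemma pow_div_succ_le_pow_div_one_sub_pow_mul :
    x ^ (n + 1) / (n + 1) ≤ x ^ (n + 1) / (1 - x ^ (n + 1)) * (1 - x) := by
  have hpos : 0 < 1 - x ^ (n + 1) := sub_pos.mpr (pow_lt_one₀ hx₀ hx₁ n.add_one_ne_zero)
  have := one_sub_pow_le_mul_one_sub (x := x) (by linarith) (n + 1)
  push_cast at this
  rw [div_mul_eq_mul_div, div_le_div_iff₀ (by positivity) hpos]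
  nlinarith [pow_nonneg hx₀ (n + 1)]

lemma pow_div_one_sub_pow_mul_le :
    x ^ (n + 1) / (1 - x ^ (n + 1)) * (1 - x) ≤
      x ^ (n + 1) / (n + 1) + x ^ (n + 1) * (1 - x) := by
  have hpos : 0 < 1 - x ^ (n + 1) := sub_pos.mpr (pow_lt_one₀ hx₀ hx₁ n.add_one_ne_zero)
  have := mul_pow_mul_one_sub_le_one_sub_pow hx₀ hx₁.le (n + 1)
  push_cast at this
  rw [div_mul_eq_mul_div, div_le_iff₀ hpos]
  field_simp
  nlinarith [pow_nonneg hx₀ (n + 1)]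

end LambertTerm

section LambertSeries

variable {x : ℝ} (hx₀ : 0 ≤ x) (hx₁ : x < 1)
include hx₀ hx₁

lemma hasSum_pow_succ_mul_one_sub : HasSum (fun n : ℕ => x ^ (n + 1) * (1 - x)) x := by
  have h := ((hasSum_geometric_of_lt_one hx₀ hx₁).mul_left x).mul_right (1 - x)
  rw [mul_assoc, inv_mul_cancel₀ (sub_pos.mpr hx₁).ne', mul_one] at h
  simpa only [pow_succ'] using h

lemma hasSum_log_one_div_one_sub :
    HasSum (fun n : ℕ => x ^ (n + 1) / (n + 1)) (Real.log (1 / (1 - x))) := by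
  rw [one_div, Real.log_inv]
  exact Real.hasSum_pow_div_log_of_abs_lt_one (abs_lt.mpr ⟨by linarith, hx₁⟩)

lemma summable_pow_div_one_sub_pow_mul :
    Summable (fun n : ℕ => x ^ (n + 1) / (1 - x ^ (n + 1)) * (1 - x)) := by
  refine Summable.of_nonneg_of_le (fun n => ?_) (pow_div_one_sub_pow_mul_le hx₀ hx₁)
    ((hasSum_log_one_div_one_sub hx₀ hx₁).add (hasSum_pow_succ_mul_one_sub hx₀ hx₁)).summable
  have hpow : x ^ (n + 1) < 1 := pow_lt_one₀ hx₀ hx₁ n.add_one_ne_zero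
  have hx : 0 ≤ 1 - x := by linarith
  positivity

lemma log_one_div_one_sub_le_tsum_mul :
    Real.log (1 / (1 - x)) ≤ (∑' n : ℕ, x ^ (n + 1) / (1 - x ^ (n + 1))) * (1 - x) := by
  rw [← tsum_mul_right]
  exact hasSum_le (pow_div_succ_le_pow_div_one_sub_pow_mul hx₀ hx₁)
    (hasSum_log_one_div_one_sub hx₀ hx₁) (summable_pow_div_one_sub_pow_mul hx₀ hx₁).hasSum

lemma tsum_mul_le_log_one_div_one_sub_add :
    (∑' n : ℕ, x ^ (n + 1) / (1 - x ^ (n + 1))) * (1 - x) ≤ Real.log (1 / (1 - x)) + x := by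
  rw [← tsum_mul_right]
  exact hasSum_le (pow_div_one_sub_pow_mul_le hx₀ hx₁)
    (summable_pow_div_one_sub_pow_mul hx₀ hx₁).hasSum
    ((hasSum_log_one_div_one_sub hx₀ hx₁).add (hasSum_pow_succ_mul_one_sub hx₀ hx₁))

end LambertSeries

lemma tendsto_div_nhds_one_of_le_of_le_add {α : Type*} {l : Filter α} {f g : α → ℝ} {C : ℝ}
    (hg : Tendsto g l atTop) (hlow : ∀ᶠ a in l, g a ≤ f a) (hup : ∀ᶠ a in l, f a ≤ g a + C) :
    Tendsto (fun a => f a / g a) l (𝓝 1) := by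
  have hupper : Tendsto (fun a => 1 + C / g a) l (𝓝 1) := by
    simpa using tendsto_const_nhds.add (tendsto_const_nhds.div_atTop hg)
  refine tendsto_of_tendsto_of_tendsto_of_le_of_le' tendsto_const_nhds hupper ?_ ?_
  · filter_upwards [hg.eventually_gt_atTop 0, hlow] with a hpos hle
    rwa [le_div_iff₀ hpos, one_mul]
  · filter_upwards [hg.eventually_gt_atTop 0, hup] with a hpos hle
    rwa [div_le_iff₀ hpos, add_mul, one_mul, div_mul_cancel₀ _ hpos.ne']

lemma tendsto_log_one_div_one_sub_nhdsLT_one :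
    Tendsto (fun x : ℝ => Real.log (1 / (1 - x))) (𝓝[<] 1) atTop := by
  have hsub : Tendsto (fun x : ℝ => 1 - x) (𝓝[<] 1) (𝓝[>] 0) :=
    tendsto_nhdsWithin_of_tendsto_nhds_of_eventually_within _
      (((continuous_const.sub continuous_id).tendsto' 1 0 (sub_self 1)).mono_left
        nhdsWithin_le_nhds)
      (eventually_nhdsWithin_of_forall fun _ hx => Set.mem_Ioi.mpr (sub_pos.mpr hx))
  simpa only [one_div, Function.comp_def] using
    Real.tendsto_log_atTop.comp (tendsto_inv_nhdsGT_zero.comp hsub)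

open Filter in
/-- As `λ → 1⁻`, `T_0(λ) = ∑_{i≥1} λ^i/(1-λ^i)` satisfies
`T_0(λ) · (1-λ) / log(1/(1-λ)) → 1`. -/
theorem lambert_series_zero_heavy_traffic :
    Tendsto
      (fun lam : ℝ =>
        (∑' i : ℕ, lam ^ (i + 1) / (1 - lam ^ (i + 1))) * (1 - lam) /
          Real.log (1 / (1 - lam)))
      (nhdsWithin 1 (Set.Ioo 0 1)) (nhds 1) := by
  have hmem : ∀ᶠ x in 𝓝[Set.Ioo 0 1] (1 : ℝ), x ∈ Set.Ioo 0 1 := self_mem_nhdsWithin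
  refine tendsto_div_nhds_one_of_le_of_le_add (C := 1)
    (tendsto_log_one_div_one_sub_nhdsLT_one.mono_left (nhdsWithin_mono _ Set.Ioo_subset_Iio_self))
    (hmem.mono fun x hx => log_one_div_one_sub_le_tsum_mul hx.1.le hx.2)
    (hmem.mono fun x hx => ?_)
  linarith [tsum_mul_le_log_one_div_one_sub_add hx.1.le hx.2, hx.2]
end

section
/- For 0 < λ < 1 and m ≥ 1, the m-th moment of the station index I satisfies Ex[I^m] = (1-λ) ∑_{l=0}^{m-1} C(m,l) (-1)^{m-1-l} T_l(λ), where Pr[I ≥ i] = (1-λ)λ^i/(1-λ^i) for i ≥ 1 and T_l(λ) = ∑_{i≥1} i^l λ^i/(1-λ^i). -/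
/-!
Summation by parts turns `∑ i^m (Pr[I ≥ i] - Pr[I ≥ i+1])` into `∑ (i^m - (i-1)^m) Pr[I ≥ i]`;
there is no boundary term because `i^m Pr[I ≥ i] ≤ i^m λ^i` is summable. Expanding
`i^m - (i-1)^m` binomially leaves a finite combination of the Lambert series `T_l(λ)`, each of
which converges by comparison with `∑ i^l λ^i / (1-λ)`.
-/

open Finset

theorem tsum_mul_sub_shift_eq_tsum_sub_mul {R : Type*} [Ring R] [TopologicalSpace R]
    [IsTopologicalRing R] [T2Space R] {f P : ℕ → R} (hf : f 0 = 0)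
    (hfP : Summable fun n => f (n + 1) * P (n + 1))
    (hdP : Summable fun n => (f (n + 1) - f n) * P (n + 1)) :
    ∑' n, f (n + 1) * (P (n + 1) - P (n + 2)) = ∑' n, (f (n + 1) - f n) * P (n + 1) := by
  have hg : Summable fun n => f n * P (n + 1) := (hfP.sub hdP).congr fun n => by noncomm_ring
  have hg' : Summable fun n => f (n + 1) * P (n + 2) := (summable_nat_add_iff 1).mpr hg
  calc ∑' n, f (n + 1) * (P (n + 1) - P (n + 2))
      = ∑' n, f (n + 1) * P (n + 1) - ∑' n, f (n + 1) * P (n + 2) := by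
        simp only [mul_sub]; exact hfP.tsum_sub hg'
    _ = ∑' n, f (n + 1) * P (n + 1) - ∑' n, f n * P (n + 1) := by
        rw [hg.tsum_eq_zero_add, hf, zero_mul, zero_add]
    _ = ∑' n, (f (n + 1) - f n) * P (n + 1) := by
        simp only [sub_mul]; exact (hfP.tsum_sub hg).symm

theorem pow_sub_sub_one_pow {R : Type*} [CommRing R] (x : R) (m : ℕ) :
    x ^ m - (x - 1) ^ m = ∑ l ∈ range m, (m.choose l : R) * (-1) ^ (m - 1 - l) * x ^ l := by
  rw [sub_eq_add_neg x, add_pow, sum_range_succ, Nat.sub_self, pow_zero, Nat.choose_self,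
    Nat.cast_one, mul_one, mul_one, sub_add_cancel_right, ← sum_neg_distrib]
  refine sum_congr rfl fun l hl => ?_
  rw [show m - l = m - 1 - l + 1 by have := mem_range.mp hl; omega, pow_succ]
  ring

theorem summable_natCast_pow_mul_pow_div_one_sub_pow {𝕜 : Type*} [NormedDivisionRing 𝕜]
    [CompleteSpace 𝕜] {q : 𝕜} (hq : ‖q‖ < 1) (k : ℕ) :
    Summable fun n : ℕ => (n : 𝕜) ^ k * q ^ n / (1 - q ^ n) := by
  have hgeo : Summable fun n : ℕ => (n : ℝ) ^ k * ‖q‖ ^ n / (1 - ‖q‖) :=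
    (summable_pow_mul_geometric_of_norm_lt_one (R := ℝ) k (by rwa [norm_norm])).div_const _
  refine hgeo.of_norm_bounded_eventually_nat (Filter.eventually_atTop.mpr ⟨1, fun n hn => ?_⟩)
  have hden : 1 - ‖q‖ ≤ ‖1 - q ^ n‖ :=
    calc 1 - ‖q‖ ≤ 1 - ‖q‖ ^ n := by
          gcongr; simpa using pow_le_pow_of_le_one (norm_nonneg q) hq.le hn
      _ ≤ ‖1 - q ^ n‖ := by simpa [norm_pow] using norm_sub_norm_le (1 : 𝕜) (q ^ n)
  rw [norm_div, norm_mul, norm_pow, norm_pow]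
  gcongr
  simpa using Nat.norm_cast_le (α := 𝕜) n

/-- For `0 < λ < 1` and `m ≥ 1`, the `m`-th moment of the station index `I` satisfies
`Ex[I^m] = (1-λ) ∑_{l=0}^{m-1} C(m,l) (-1)^{m-1-l} T_l(λ)`, where
`Pr[I ≥ i] = (1-λ)λ^i/(1-λ^i)` for `i ≥ 1` and `T_l(λ) = ∑_{i≥1} i^l λ^i/(1-λ^i)`. -/
theorem fos_station_index_moments (lam : ℝ) (hlam0 : 0 < lam) (hlam1 : lam < 1)
    (m : ℕ) (hm : 1 ≤ m) :
    (∑' i : ℕ, ((i + 1 : ℕ) : ℝ) ^ m *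
        ((1 - lam) * lam ^ (i + 1) / (1 - lam ^ (i + 1)) -
          (1 - lam) * lam ^ (i + 2) / (1 - lam ^ (i + 2))))
      = (1 - lam) * ∑ l ∈ Finset.range m, (m.choose l : ℝ) * (-1) ^ (m - 1 - l) *
          ∑' i : ℕ, ((i + 1 : ℕ) : ℝ) ^ l * lam ^ (i + 1) / (1 - lam ^ (i + 1)) := by
  set T : ℕ → ℕ → ℝ := fun l i => ((i + 1 : ℕ) : ℝ) ^ l * lam ^ (i + 1) / (1 - lam ^ (i + 1))
  have hlam : ‖lam‖ < 1 := by rwa [Real.norm_of_nonneg hlam0.le]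
  have hT (l : ℕ) : Summable (T l) :=
    (summable_nat_add_iff 1).mpr (summable_natCast_pow_mul_pow_div_one_sub_pow hlam l)
  have hdiff (i : ℕ) : (((i + 1 : ℕ) : ℝ) ^ m - (i : ℝ) ^ m) *
      ((1 - lam) * lam ^ (i + 1) / (1 - lam ^ (i + 1))) =
      (1 - lam) * ∑ l ∈ range m, (m.choose l : ℝ) * (-1) ^ (m - 1 - l) * T l i := by
    have h := pow_sub_sub_one_pow ((i + 1 : ℕ) : ℝ) m
    rw [Nat.cast_succ, add_sub_cancel_right] at h
    rw [Nat.cast_succ, h, mul_sum, sum_mul]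
    refine sum_congr rfl fun l _ => ?_
    simp only [T]; push_cast; ring
  have hfP : Summable fun i : ℕ => ((i + 1 : ℕ) : ℝ) ^ m *
      ((1 - lam) * lam ^ (i + 1) / (1 - lam ^ (i + 1))) :=
    ((hT m).mul_left (1 - lam)).congr fun i => by simp only [T]; ring
  have hdP := ((summable_sum fun l _ => (hT l).mul_left _).mul_left (1 - lam)).congr
    fun i => (hdiff i).symm
  rw [tsum_mul_sub_shift_eq_tsum_sub_mul (f := fun n : ℕ => (n : ℝ) ^ m)
      (P := fun n => (1 - lam) * lam ^ n / (1 - lam ^ n))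
      (by simp [Nat.one_le_iff_ne_zero.mp hm]) hfP hdP,
    tsum_congr hdiff, tsum_mul_left, Summable.tsum_finsetSum fun l _ => (hT l).mul_left _]
  simp only [tsum_mul_left, T]
end

section
/- For 0 < λ < 1 and i ≥ 1, the derivative at t = 1 of g_i(t) = q^i t^i (Q(t)-P(t)) / (Q(t)^{i+1} - P(t)^{i+1} - pt(Q(t)^i - P(t)^i)) equals (1+λ)(i(1-λ) - λ(1-λ^i))/(1-λ)², where p = λ/(1+λ), q = 1/(1+λ), P(t) = (1-√(1-4pqt²))/2, Q(t) = (1+√(1-4pqt²))/2. -/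
/-!
`P t` and `Q t` are the roots of `x² - x + p q t² = 0`; at `t = 1`, since `p + q = 1`, they are
`p` and `q`, and differentiating the square root gives `Q' = -P' = -2pq/(q - p)`. Writing the denominator
as `Q^i (Q - p t) - P^i (P - p t)`, the factor `P - p t` vanishes at `t = 1`, so the derivative
of `P^i` never enters; numerator and denominator both equal `q^i (q - p)` there. The quotient rule
then yields the classical mean absorption time `i/(q - p) - p (1 - (p/q)^i)/(q - p)²`, which is
the claimed formula after substituting `p = λ/(1 + λ)`, `q = 1/(1 + λ)`.
-/

theorem natCast_mul_pow_sub_one_mul {R : Type*} [CommSemiring R] (x : R) (n : ℕ) :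
    (n : R) * x ^ (n - 1) * x = n * x ^ n := by
  cases n with
  | zero => simp
  | succ n => rw [Nat.add_sub_cancel, mul_assoc, ← pow_succ]

theorem HasDerivAt.div_eq_sub_div {𝕜 : Type*} [NontriviallyNormedField 𝕜] {f g : 𝕜 → 𝕜}
    {f' g' x : 𝕜} (hf : HasDerivAt f f' x) (hg : HasDerivAt g g' x) (hfg : f x = g x)
    (hg0 : g x ≠ 0) : HasDerivAt (fun t => f t / g t) ((f' - g') / g x) x :=
  (hf.fun_div hg hg0).congr_deriv (by rw [hfg]; field_simp)

namespace ReflectedWalk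

noncomputable def rootMinus (p q t : ℝ) : ℝ := (1 - √(1 - 4 * p * q * t ^ 2)) / 2

noncomputable def rootPlus (p q t : ℝ) : ℝ := (1 + √(1 - 4 * p * q * t ^ 2)) / 2

noncomputable def absorptionGF (p q : ℝ) (i : ℕ) (t : ℝ) : ℝ :=
  q ^ i * t ^ i * (rootPlus p q t - rootMinus p q t) /
    (rootPlus p q t ^ (i + 1) - rootMinus p q t ^ (i + 1) -
      p * t * (rootPlus p q t ^ i - rootMinus p q t ^ i))

variable {p q : ℝ}

theorem sqrt_one_sub_four_mul (hpq : p + q = 1) (hlt : p < q) :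
    √(1 - 4 * p * q * 1 ^ 2) = q - p := by
  rw [show 1 - 4 * p * q * 1 ^ 2 = (q - p) ^ 2 by linear_combination (-(1 + p + q)) * hpq]
  exact Real.sqrt_sq (by linarith)

theorem rootMinus_one (hpq : p + q = 1) (hlt : p < q) : rootMinus p q 1 = p := by
  rw [rootMinus, sqrt_one_sub_four_mul hpq hlt]; linarith

theorem rootPlus_one (hpq : p + q = 1) (hlt : p < q) : rootPlus p q 1 = q := by
  rw [rootPlus, sqrt_one_sub_four_mul hpq hlt]; linarith

theorem hasDerivAt_sqrt_one_sub_four_mul (hpq : p + q = 1) (hlt : p < q) :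
    HasDerivAt (fun t => √(1 - 4 * p * q * t ^ 2)) (-(4 * p * q / (q - p))) 1 := by
  have hsqrt := sqrt_one_sub_four_mul hpq hlt
  have hne : 1 - 4 * p * q * (1 : ℝ) ^ 2 ≠ 0 := by
    intro h; rw [h, Real.sqrt_zero] at hsqrt; linarith
  have hqp : q - p ≠ 0 := by linarith
  refine (((hasDerivAt_pow 2 (1 : ℝ)).const_mul (4 * p * q)).const_sub 1 |>.sqrt hne).congr_deriv ?_
  rw [hsqrt]; field_simp; norm_num

theorem hasDerivAt_rootMinus_one (hpq : p + q = 1) (hlt : p < q) :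
    HasDerivAt (rootMinus p q) (2 * p * q / (q - p)) 1 :=
  ((hasDerivAt_sqrt_one_sub_four_mul hpq hlt).const_sub 1 |>.div_const 2).congr_deriv (by ring)

theorem hasDerivAt_rootPlus_one (hpq : p + q = 1) (hlt : p < q) :
    HasDerivAt (rootPlus p q) (-(2 * p * q / (q - p))) 1 :=
  ((hasDerivAt_sqrt_one_sub_four_mul hpq hlt).const_add 1 |>.div_const 2).congr_deriv (by ring)

theorem hasDerivAt_numerator_one (hpq : p + q = 1) (hlt : p < q) (i : ℕ) :
    HasDerivAt (fun t => q ^ i * t ^ i * (rootPlus p q t - rootMinus p q t))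
      (q ^ i * (i * (q - p) - 4 * p * q / (q - p))) 1 := by
  refine (((hasDerivAt_pow i (1 : ℝ)).const_mul (q ^ i)).mul
    ((hasDerivAt_rootPlus_one hpq hlt).sub (hasDerivAt_rootMinus_one hpq hlt))).congr_deriv ?_
  simp only [Pi.sub_apply, rootPlus_one hpq hlt, rootMinus_one hpq hlt]; ring

theorem hasDerivAt_denominator_one (hpq : p + q = 1) (hlt : p < q) (i : ℕ) :
    HasDerivAt (fun t => rootPlus p q t ^ (i + 1) - rootMinus p q t ^ (i + 1) -
        p * t * (rootPlus p q t ^ i - rootMinus p q t ^ i))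
      (-(2 * i * p * q ^ i) - q ^ i * (2 * p * q / (q - p) + p) -
        p ^ i * (2 * p * q / (q - p) - p)) 1 := by
  have hP := hasDerivAt_rootMinus_one hpq hlt
  have hQ := hasDerivAt_rootPlus_one hpq hlt
  have hpt : HasDerivAt (fun t : ℝ => p * t) p 1 := by
    simpa using (hasDerivAt_id (1 : ℝ)).const_mul p
  have hqp : q - p ≠ 0 := by linarith
  have hsplit : (fun t => rootPlus p q t ^ (i + 1) - rootMinus p q t ^ (i + 1) -
      p * t * (rootPlus p q t ^ i - rootMinus p q t ^ i)) = fun t =>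
      rootPlus p q t ^ i * (rootPlus p q t - p * t) -
        rootMinus p q t ^ i * (rootMinus p q t - p * t) := by
    funext t; ring
  rw [hsplit]
  refine (((hQ.pow i).mul (hQ.sub hpt)).sub ((hP.pow i).mul (hP.sub hpt))).congr_deriv ?_
  simp only [Pi.sub_apply, Pi.pow_apply, rootPlus_one hpq hlt, rootMinus_one hpq hlt]
  field_simp
  linear_combination (-2 * p * (q - p)) * natCast_mul_pow_sub_one_mul q i

theorem hasDerivAt_absorptionGF_one (hpq : p + q = 1) (hlt : p < q) (i : ℕ) :
    HasDerivAt (absorptionGF p q i) (i / (q - p) - p * (1 - (p / q) ^ i) / (q - p) ^ 2) 1 := by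
  have hq : q ≠ 0 := by linarith
  have hqp : q - p ≠ 0 := by linarith
  have hval : rootPlus p q 1 ^ (i + 1) - rootMinus p q 1 ^ (i + 1) -
      p * 1 * (rootPlus p q 1 ^ i - rootMinus p q 1 ^ i) = q ^ i * (q - p) := by
    rw [rootPlus_one hpq hlt, rootMinus_one hpq hlt]; ring
  refine ((hasDerivAt_numerator_one hpq hlt i).div_eq_sub_div
    (hasDerivAt_denominator_one hpq hlt i) ?_ ?_).congr_deriv ?_
  · rw [hval, rootPlus_one hpq hlt, rootMinus_one hpq hlt]; ring
  · rw [hval]; positivity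
  · obtain rfl : q = 1 - p := by linarith
    rw [hval, div_pow]; field_simp; ring

end ReflectedWalk

theorem absorption_gf_deriv_at_one_general (lam : ℝ) (hlam0 : 0 < lam) (hlam1 : lam < 1)
    (i : ℕ) :
    let p : ℝ := lam / (1 + lam)
    let q : ℝ := 1 / (1 + lam)
    let P : ℝ → ℝ := fun t => (1 - Real.sqrt (1 - 4 * p * q * t ^ 2)) / 2
    let Q : ℝ → ℝ := fun t => (1 + Real.sqrt (1 - 4 * p * q * t ^ 2)) / 2
    HasDerivAt
      (fun t : ℝ => q ^ i * t ^ i * (Q t - P t) /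
        (Q t ^ (i + 1) - P t ^ (i + 1) - p * t * (Q t ^ i - P t ^ i)))
      ((1 + lam) * ((i : ℝ) * (1 - lam) - lam * (1 - lam ^ i)) / (1 - lam) ^ 2) 1 := by
  intro p q P Q
  have hpos : 0 < 1 + lam := by linarith
  have hpq : p + q = 1 := by simp only [p, q]; field_simp; ring
  have hlt : p < q := by simp only [p, q]; gcongr
  have hratio : p / q = lam := by simp only [p, q]; field_simp
  refine (ReflectedWalk.hasDerivAt_absorptionGF_one hpq hlt i).congr_deriv ?_
  have hq : q - p = (1 - lam) / (1 + lam) := by simp only [p, q]; ring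
  have hne : 1 - lam ≠ 0 := by linarith
  rw [hratio, hq]
  simp only [p]
  field_simp

/-- For `0 < λ < 1` and `i ≥ 1`, the derivative at `t = 1` of
`g_i(t) = q^i t^i (Q(t)-P(t)) / (Q(t)^{i+1} - P(t)^{i+1} - pt(Q(t)^i - P(t)^i))`
equals `(1+λ)(i(1-λ) - λ(1-λ^i))/(1-λ)²`, where `p = λ/(1+λ)`, `q = 1/(1+λ)`,
`P(t) = (1-√(1-4pqt²))/2`, `Q(t) = (1+√(1-4pqt²))/2`. -/
theorem absorption_gf_deriv_at_one (lam : ℝ) (hlam0 : 0 < lam) (hlam1 : lam < 1)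
    (i : ℕ) (hi : 1 ≤ i) :
    let p : ℝ := lam / (1 + lam)
    let q : ℝ := 1 / (1 + lam)
    let P : ℝ → ℝ := fun t => (1 - Real.sqrt (1 - 4 * p * q * t ^ 2)) / 2
    let Q : ℝ → ℝ := fun t => (1 + Real.sqrt (1 - 4 * p * q * t ^ 2)) / 2
    HasDerivAt
      (fun t : ℝ => q ^ i * t ^ i * (Q t - P t) /
        (Q t ^ (i + 1) - P t ^ (i + 1) - p * t * (Q t ^ i - P t ^ i)))
      ((1 + lam) * ((i : ℝ) * (1 - lam) - lam * (1 - lam ^ i)) / (1 - lam) ^ 2) 1 :=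
  absorption_gf_deriv_at_one_general lam hlam0 hlam1 i
end

section
/- As λ → 1⁻, (1-λ)³ · (λ(6+λ+λ²)/(1-λ)³ - 4T₁(λ)/(1-λ)) → 8 - 4ζ(2) = 8 - 2π²/3, where T₁(λ) = ∑_{i≥1} iλ^i/(1-λ^i). -/
open Filter Real Topology Finset

/-!
Interchanging the double sum `∑ᵢ ∑ₖ i λ^(i k)` turns `T₁` into the Lambert series
`∑ₙ λⁿ / (1 - λⁿ)²`, so `(1 - λ)² T₁(λ) = ∑ₙ λⁿ / (1 + λ + ⋯ + λⁿ⁻¹)²`. Each term tends to `1 / n²`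
as `λ → 1⁻` and, by Cauchy–Schwarz, is bounded by `1 / n²` on `[0, 1]`, so dominated convergence
gives `(1 - λ)² T₁(λ) → ζ(2) = π² / 6`, while `λ (6 + λ + λ²) → 8`.
-/

lemma hasSum_pow_succ {x : ℝ} (hx : |x| < 1) :
    HasSum (fun k : ℕ => x ^ (k + 1)) (x / (1 - x)) := by
  simpa [pow_succ', div_eq_mul_inv] using (hasSum_geometric_of_abs_lt_one hx).mul_left x

lemma hasSum_succ_mul_pow_succ {x : ℝ} (hx : |x| < 1) :
    HasSum (fun i : ℕ => ((i + 1 : ℕ) : ℝ) * x ^ (i + 1)) (x / (1 - x) ^ 2) := by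
  simpa using (hasSum_nat_add_iff' 1).mpr (hasSum_coe_mul_geometric_of_norm_lt_one (𝕜 := ℝ) hx)

theorem tsum_succ_mul_pow_div_one_sub_pow {x : ℝ} (hx₀ : 0 ≤ x) (hx₁ : x < 1) :
    ∑' i : ℕ, ((i + 1 : ℕ) : ℝ) * x ^ (i + 1) / (1 - x ^ (i + 1)) =
      ∑' k : ℕ, x ^ (k + 1) / (1 - x ^ (k + 1)) ^ 2 := by
  have hx : |x| < 1 := by rwa [abs_of_nonneg hx₀]
  have hpow (n : ℕ) : |x ^ (n + 1)| < 1 := by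
    rw [abs_pow]; exact pow_lt_one₀ (abs_nonneg x) hx (Nat.succ_ne_zero n)
  let f : ℕ → ℕ → ℝ := fun i k => ((i + 1 : ℕ) : ℝ) * x ^ ((i + 1) * (k + 1))
  have hrow (i : ℕ) : HasSum (f i) (((i + 1 : ℕ) : ℝ) * x ^ (i + 1) / (1 - x ^ (i + 1))) := by
    simpa [f, pow_mul, mul_div_assoc] using (hasSum_pow_succ (hpow i)).mul_left ((i + 1 : ℕ) : ℝ)
  have hcol (k : ℕ) : HasSum (fun i => f i k) (x ^ (k + 1) / (1 - x ^ (k + 1)) ^ 2) := by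
    simpa [f, ← pow_mul, mul_comm] using hasSum_succ_mul_pow_succ (hpow k)
  have hf : Summable (Function.uncurry f) := by
    refine Summable.of_nonneg_of_le (fun _ => mul_nonneg (Nat.cast_nonneg _) (pow_nonneg hx₀ _))
      (fun ⟨i, k⟩ => ?_)
      ((hasSum_succ_mul_pow_succ hx).summable.mul_of_nonneg
        (summable_geometric_of_lt_one hx₀ hx₁) (fun _ => by positivity) (fun _ => by positivity))
    rw [Function.uncurry_apply_pair, mul_assoc, ← pow_add]
    exact mul_le_mul_of_nonneg_left (pow_le_pow_of_le_one hx₀ hx₁.le (by nlinarith)) (by positivity)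
  rw [tsum_congr fun i => (hrow i).tsum_eq.symm, ← hf.tsum_comm]
  exact tsum_congr fun k => (hcol k).tsum_eq

lemma sq_mul_pow_le_sq_geom_sum {x : ℝ} (hx : 0 ≤ x) (n : ℕ) :
    ((n + 1 : ℕ) : ℝ) ^ 2 * x ^ n ≤ (∑ j ∈ range (n + 1), x ^ j) ^ 2 := by
  have hrefl : ∑ j ∈ range (n + 1), x ^ (n - j) = ∑ j ∈ range (n + 1), x ^ j := by
    simpa using sum_range_reflect (fun j => x ^ j) (n + 1)
  -- Cauchy–Schwarz, pairing `x ^ j` with `x ^ (n - j)`: each product is `x ^ n`.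
  have hcs := sum_sq_le_sum_mul_sum_of_sq_le_mul (range (n + 1)) (r := fun _ => √x ^ n)
    (f := fun j => x ^ j) (g := fun j => x ^ (n - j)) (fun _ _ => by positivity)
    (fun _ _ => by positivity) (fun j hj => by
      rw [← pow_mul, mul_comm, pow_mul, sq_sqrt hx, ← pow_add,
        Nat.add_sub_cancel' (Nat.lt_succ_iff.mp (mem_range.mp hj))])
  rwa [hrefl, ← sq, sum_const, card_range, nsmul_eq_mul, mul_pow, ← pow_mul, mul_comm n,
    pow_mul, sq_sqrt hx] at hcs

lemma pow_succ_div_sq_geom_sum_le {x : ℝ} (hx₀ : 0 ≤ x) (hx₁ : x ≤ 1) (n : ℕ) :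
    x ^ (n + 1) / (∑ j ∈ range (n + 1), x ^ j) ^ 2 ≤ 1 / ((n + 1 : ℕ) : ℝ) ^ 2 := by
  have hS := geom_sum_pos hx₀ (Nat.succ_ne_zero n)
  rw [div_le_div_iff₀ (by positivity) (by positivity)]
  calc x ^ (n + 1) * ((n + 1 : ℕ) : ℝ) ^ 2 = x * (((n + 1 : ℕ) : ℝ) ^ 2 * x ^ n) := by ring
    _ ≤ 1 * (∑ j ∈ range (n + 1), x ^ j) ^ 2 :=
      mul_le_mul hx₁ (sq_mul_pow_le_sq_geom_sum hx₀ n) (by positivity) zero_le_one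

lemma hasSum_one_div_succ_sq : HasSum (fun n : ℕ => 1 / ((n + 1 : ℕ) : ℝ) ^ 2) (π ^ 2 / 6) := by
  have := (hasSum_nat_add_iff' 1).mpr hasSum_zeta_two
  rwa [sum_range_one, Nat.cast_zero, zero_pow two_ne_zero, div_zero, sub_zero] at this

theorem tendsto_tsum_pow_succ_div_sq_geom_sum :
    Tendsto (fun x : ℝ => ∑' n : ℕ, x ^ (n + 1) / (∑ j ∈ range (n + 1), x ^ j) ^ 2)
      (𝓝[<] 1) (𝓝 (π ^ 2 / 6)) := by
  rw [← hasSum_one_div_succ_sq.tsum_eq]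
  refine tendsto_tsum_of_dominated_convergence hasSum_one_div_succ_sq.summable
    (fun n => ?_) ?_
  · have hcont : ContinuousAt (fun x : ℝ => x ^ (n + 1) / (∑ j ∈ range (n + 1), x ^ j) ^ 2) 1 :=
      ContinuousAt.div (by fun_prop) (by fun_prop) (by simp [Nat.cast_add_one_ne_zero])
    simpa using hcont.tendsto.mono_left nhdsWithin_le_nhds
  · filter_upwards [Ioo_mem_nhdsLT one_pos] with x ⟨hx₀, hx₁⟩ n
    rw [norm_of_nonneg (by positivity)]
    exact pow_succ_div_sq_geom_sum_le hx₀.le hx₁.le n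

lemma one_sub_sq_mul_tsum_succ_mul_pow_div_one_sub_pow {x : ℝ} (hx₀ : 0 ≤ x) (hx₁ : x < 1) :
    (1 - x) ^ 2 * ∑' i : ℕ, ((i + 1 : ℕ) : ℝ) * x ^ (i + 1) / (1 - x ^ (i + 1)) =
      ∑' n : ℕ, x ^ (n + 1) / (∑ j ∈ range (n + 1), x ^ j) ^ 2 := by
  rw [tsum_succ_mul_pow_div_one_sub_pow hx₀ hx₁, ← tsum_mul_left]
  refine tsum_congr fun n => ?_
  have hS := geom_sum_pos hx₀ (Nat.succ_ne_zero n)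
  have hx : 1 - x ≠ 0 := sub_ne_zero.mpr hx₁.ne'
  rw [← mul_neg_geom_sum]
  field_simp

open Filter Real in
/-- As `λ → 1⁻`,
`(1-λ)³ · (λ(6+λ+λ²)/(1-λ)³ - 4T₁(λ)/(1-λ)) → 8 - 4ζ(2) = 8 - 2π²/3`,
where `T₁(λ) = ∑_{i≥1} iλ^i/(1-λ^i)`. -/
theorem fos_waiting_time_variance_asymptotic :
    Tendsto
      (fun lam : ℝ => (1 - lam) ^ 3 *
        (lam * (6 + lam + lam ^ 2) / (1 - lam) ^ 3 -
          4 * (∑' i : ℕ, ((i + 1 : ℕ) : ℝ) * lam ^ (i + 1) / (1 - lam ^ (i + 1))) / (1 - lam)))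
      (nhdsWithin 1 (Set.Ioo 0 1)) (nhds (8 - 2 * π ^ 2 / 3)) := by
  have hlim : Tendsto (fun x : ℝ => x * (6 + x + x ^ 2) -
      4 * ∑' n : ℕ, x ^ (n + 1) / (∑ j ∈ range (n + 1), x ^ j) ^ 2) (𝓝[<] 1)
      (𝓝 (8 - 2 * π ^ 2 / 3)) := by
    have hpoly : Tendsto (fun x : ℝ => x * (6 + x + x ^ 2)) (𝓝[<] 1) (𝓝 8) := by
      have : Continuous (fun x : ℝ => x * (6 + x + x ^ 2)) := by fun_prop
      convert (this.tendsto 1).mono_left nhdsWithin_le_nhds using 2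
      norm_num
    convert hpoly.sub (tendsto_tsum_pow_succ_div_sq_geom_sum.const_mul 4) using 2
    ring
  refine (hlim.mono_left (nhdsWithin_mono _ Set.Ioo_subset_Iio_self)).congr' ?_
  filter_upwards [self_mem_nhdsWithin] with x ⟨hx₀, hx₁⟩
  have hx : 1 - x ≠ 0 := sub_ne_zero.mpr hx₁.ne'
  rw [← one_sub_sq_mul_tsum_succ_mul_pow_div_one_sub_pow hx₀.le hx₁]
  field_simp
end
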